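/- Let f ∈ C_ru^b(G) be nonnegative and not identically zero, let φ ∈ C_00(G) be nonnegative with ∫_G φ dm_G = 1, and let D be the real linear span of {ψ*h : ψ ∈ C_00(G), h ∈ C_ru^b(G) measurably dominated by f}. Let I : D → ℝ be linear, with I(v) ≥ 0 whenever v ∈ D satisfies v ≥ 0, with I(g·v) = I(v) for all g ∈ G and v ∈ D, and p_{φ*f}-continuous in the sense that there is C ≥ 0 with |I(v)| ≤ C · p_{φ*f}(v) for all v ∈ D. Then I is measurably invariant: I(μ*h) = I(h) for every μ ∈ M^1_00(G) and every h ∈ D. -/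

import Mathlib

open MeasureTheory Topology Pointwise
open scoped ENNReal

variable {G : Type*}

section Defs

variable [Group G] [TopologicalSpace G] [MeasurableSpace G]

/-- Convolution of a (positive Borel) measure `μ` with a function `f`:
`(μ * f)(x) = ∫_G f(y⁻¹ x) dμ(y)`. -/
noncomputable def mConv (μ : Measure G) (f : G → ℝ) : G → ℝ :=
  fun x => ∫ y, f (y⁻¹ * x) ∂μ

/-- Convolution of two functions with respect to a reference measure `m`:
`(φ * f)(x) = ∫_G φ(y) f(y⁻¹ x) dm(y)`. -/
noncomputable def fConv (m : Measure G) (φ f : G → ℝ) : G → ℝ :=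
  fun x => ∫ y, φ y * f (y⁻¹ * x) ∂m

/-- A real-valued function is bounded. -/
def IsBdd (f : G → ℝ) : Prop := ∃ C : ℝ, ∀ x, |f x| ≤ C

/-- `M₀₀(G)₊`: finite positive regular Borel measures with compact support. -/
def MComp (μ : Measure G) : Prop :=
  IsFiniteMeasure μ ∧ μ.Regular ∧ ∃ K : Set G, IsCompact K ∧ μ Kᶜ = 0

/-- `h` is `G`-dominated by `f`. -/
def GDom (f h : G → ℝ) : Prop :=
  ∃ (n : ℕ) (t : Fin n → ℝ) (g : Fin n → G),
    (∀ j, 0 ≤ t j) ∧ ∀ x, |h x| ≤ ∑ j, t j * f ((g j)⁻¹ * x)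

/-- `h` is measurably dominated by `f`. -/
def MDom (f h : G → ℝ) : Prop :=
  ∃ μ : Measure G, MComp μ ∧ ∀ x, |h x| ≤ mConv μ f x

/-- The `G`-dominated "norm" `p_f`. -/
noncomputable def pNorm (f h : G → ℝ) : ℝ :=
  sInf {s : ℝ | ∃ (n : ℕ) (t : Fin n → ℝ) (g : Fin n → G),
    (∀ j, 0 ≤ t j) ∧ (∀ x, |h x| ≤ ∑ j, t j * f ((g j)⁻¹ * x)) ∧ s = ∑ j, t j}

/-- The measurably dominated "norm" `p̄_f`. -/
noncomputable def pBar (f h : G → ℝ) : ℝ :=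
  sInf {s : ℝ | ∃ μ : Measure G, MComp μ ∧ (∀ x, |h x| ≤ mConv μ f x) ∧
    s = (μ Set.univ).toReal}

/-- Bounded right uniformly continuous real functions on `G`. -/
def RUCb (f : G → ℝ) : Prop :=
  IsBdd f ∧ Continuous f ∧
    ∀ ε : ℝ, 0 < ε → ∃ U ∈ 𝓝 (1 : G), ∀ g ∈ U, ∀ x, |f (g⁻¹ * x) - f x| < ε

/-- Bounded left uniformly continuous real functions on `G`. -/
def LUCb (f : G → ℝ) : Prop :=
  IsBdd f ∧ Continuous f ∧
    ∀ ε : ℝ, 0 < ε → ∃ U ∈ 𝓝 (1 : G), ∀ g ∈ U, ∀ x, |f (x * g) - f x| < ε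

end Defs

/-! Let `v = ψ * h` be a generator of `D` and `μ` a probability measure supported in a compact
set `K`. Then `μ * v = (μ * ψ) * h`, and by uniform continuity of `ψ` the function `μ * ψ` is
uniformly approximated by Riemann sums `∑ cᵢ (yᵢ · ψ)` with `yᵢ ∈ K`, `∑ cᵢ = 1`; the error
is at most `ε χ` for a fixed cutoff `χ ≥ 0` equal to `1` on `K * supp ψ`. Invariance gives
`I (∑ cᵢ (yᵢ · v)) = I v`, and positivity bounds `|I (μ * v) - I v|` by `ε I (χ * |h|)`,
where `χ * |h|` is again in `D`. Letting `ε → 0` settles the generators; the general case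
follows by linearity. -/

open scoped Function

theorem eq_of_forall_pos_abs_sub_le_mul {a b c : ℝ} (h : ∀ ε > 0, |a - b| ≤ ε * c) : a = b := by
  have hc : 0 ≤ c := by nlinarith [h 1 one_pos, abs_nonneg (a - b)]
  refine eq_of_forall_dist_le fun δ hδ => ?_
  calc dist a b ≤ δ / (c + 1) * c := h _ (by positivity)
    _ ≤ δ := by
      rw [div_mul_eq_mul_div, div_le_iff₀ (by positivity)]
      nlinarith

theorem HasCompactSupport.isBdd [TopologicalSpace G] {ψ : G → ℝ} (hψs : HasCompactSupport ψ)
    (hψc : Continuous ψ) : IsBdd ψ :=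
  hψs.exists_bound_of_continuous hψc

section UniformPartition

variable [Group G] [TopologicalSpace G] [IsTopologicalGroup G]

theorem HasCompactSupport.exists_nhds_one_abs_inv_mul_sub_lt {ψ : G → ℝ}
    (hψs : HasCompactSupport ψ) (hψc : Continuous ψ) {ε : ℝ} (hε : 0 < ε) :
    ∃ U ∈ 𝓝 (1 : G), ∀ g ∈ U, ∀ x, |ψ (g⁻¹ * x) - ψ x| < ε := by
  let := IsTopologicalGroup.rightUniformSpace G
  have hmem := hψs.uniformContinuous_of_continuous hψc (Metric.dist_mem_uniformity hε)
  rw [uniformity_eq_comap_nhds_one'] at hmem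
  obtain ⟨V, hV, hVε⟩ := hmem
  refine ⟨V⁻¹, inv_mem_nhds_one G hV, fun g hg x => ?_⟩
  rw [abs_sub_comm, ← Real.dist_eq]
  exact hVε (a := (x, g⁻¹ * x)) (by simpa using hg)

theorem IsCompact.exists_measurable_partition_subset_smul [MeasurableSpace G] [BorelSpace G]
    [T2Space G] {K : Set G} (hK : IsCompact K) {U : Set G} (hU : U ∈ 𝓝 (1 : G)) :
    ∃ (n : ℕ) (y : Fin n → G) (P : Fin n → Set G), (∀ i, y i ∈ K) ∧
      (∀ i, MeasurableSet (P i)) ∧ Pairwise (Disjoint on P) ∧ (⋃ i, P i) = K ∧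
      ∀ i, P i ⊆ y i • U := by
  have h1U : (1 : G) ∈ interior U := mem_interior_iff_mem_nhds.mpr hU
  obtain ⟨t, htK, hKt⟩ := hK.elim_nhds_subcover (fun x => x • interior U)
    fun x _ => (isOpen_interior.smul x).mem_nhds
      (by simpa using Set.smul_mem_smul_set (a := x) h1U)
  let y : Fin t.card → G := fun i => t.equivFin.symm i
  let Q : Fin t.card → Set G := fun i => K ∩ y i • interior U
  have hQ : ∀ i, MeasurableSet (Q i) := fun i =>
    hK.measurableSet.inter (isOpen_interior.smul _).measurableSet
  refine ⟨t.card, y, disjointed Q, fun i => htK _ (t.equivFin.symm i).2, fun i => ?_,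
    disjoint_disjointed Q, ?_, fun i => ?_⟩
  · rw [disjointed_eq_inter_compl]
    exact (hQ i).inter (.iInter fun j => .iInter fun _ => (hQ j).compl)
  · rw [iUnion_disjointed]
    refine Set.Subset.antisymm (Set.iUnion_subset fun i => Set.inter_subset_left) fun x hx => ?_
    obtain ⟨z, hzt, hxz⟩ := Set.mem_iUnion₂.mp (hKt hx)
    exact Set.mem_iUnion.mpr ⟨t.equivFin ⟨z, hzt⟩, hx, by simpa [y] using hxz⟩
  · exact (disjointed_subset Q i).trans
      (Set.inter_subset_right.trans (Set.smul_set_mono interior_subset))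

end UniformPartition

theorem mConv_zero [Group G] [MeasurableSpace G] (μ : Measure G) : mConv μ (0 : G → ℝ) = 0 :=
  funext fun _ => integral_zero G ℝ

theorem mConv_smul [Group G] [MeasurableSpace G] (μ : Measure G) (c : ℝ) (v : G → ℝ) :
    mConv μ (c • v) = c • mConv μ v :=
  funext fun _ => integral_const_mul c _

theorem mConv_eq_zero_of_notMem [Group G] [TopologicalSpace G] [MeasurableSpace G]
    {μ : Measure G} {ψ : G → ℝ} {K : Set G} (hμK : μ Kᶜ = 0) {x : G}
    (hx : x ∉ K * tsupport ψ) : mConv μ ψ x = 0 := by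
  refine integral_eq_zero_of_ae ?_
  filter_upwards [mem_ae_iff.2 hμK] with y hy
  exact image_eq_zero_of_notMem_tsupport fun hyx => hx ⟨y, hy, _, hyx, mul_inv_cancel_left y x⟩

theorem hasCompactSupport_mConv [Group G] [TopologicalSpace G] [IsTopologicalGroup G]
    [MeasurableSpace G] {μ : Measure G} {ψ : G → ℝ} {K : Set G} (hK : IsCompact K)
    (hμK : μ Kᶜ = 0) (hψs : HasCompactSupport ψ) : HasCompactSupport (mConv μ ψ) :=
  HasCompactSupport.intro (hK.mul hψs) fun _ hx => mConv_eq_zero_of_notMem hμK hx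

theorem isBdd_fConv [Group G] [MeasurableSpace G] {m : Measure G} {ψ h : G → ℝ}
    (hψ : Integrable ψ m) (hh : IsBdd h) : IsBdd (fConv m ψ h) := by
  obtain ⟨C, hC⟩ := hh
  refine ⟨(∫ y, |ψ y| ∂m) * C, fun x => ?_⟩
  rw [← integral_mul_const C]
  show ‖∫ y, ψ y * h (y⁻¹ * x) ∂m‖ ≤ _
  refine norm_integral_le_of_norm_le (hψ.abs.mul_const C) (.of_forall fun y => ?_)
  rw [Real.norm_eq_abs, abs_mul]
  exact mul_le_mul_of_nonneg_left (hC _) (abs_nonneg _)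

section Convolution

variable [Group G] [TopologicalSpace G] [IsTopologicalGroup G] [MeasurableSpace G]
  [BorelSpace G] {m μ : Measure G} {ψ θ χ h : G → ℝ}

theorem integrable_mul_comp_inv_mul [IsFiniteMeasureOnCompacts m] (hψc : Continuous ψ)
    (hψs : HasCompactSupport ψ) (hhc : Continuous h) (x : G) :
    Integrable (fun y => ψ y * h (y⁻¹ * x)) m :=
  (hψc.mul (hhc.comp (continuous_inv.mul continuous_const))).integrable_of_hasCompactSupport
    hψs.mul_right

theorem continuous_fConv [IsFiniteMeasureOnCompacts m] (hψc : Continuous ψ)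
    (hψs : HasCompactSupport ψ) (hhc : Continuous h) : Continuous (fConv m ψ h) := by
  rw [← continuousOn_univ]
  refine continuousOn_integral_of_compact_support hψs ?_ fun _ y _ hy => ?_
  · exact ((hψc.comp continuous_snd).mul
      (hhc.comp (continuous_snd.inv.mul continuous_fst))).continuousOn
  · rw [image_eq_zero_of_notMem_tsupport hy, zero_mul]

theorem abs_fConv_le [IsFiniteMeasureOnCompacts m] (hχc : Continuous χ)
    (hχs : HasCompactSupport χ) (hhc : Continuous h) {c : ℝ} (hθχ : ∀ y, |θ y| ≤ c * χ y)
    (x : G) : |fConv m θ h x| ≤ c * fConv m χ (fun z => |h z|) x := by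
  rw [fConv, fConv, ← integral_const_mul c]
  show ‖∫ y, θ y * h (y⁻¹ * x) ∂m‖ ≤ _
  refine norm_integral_le_of_norm_le
    ((integrable_mul_comp_inv_mul hχc hχs hhc.abs x).const_mul c) (.of_forall fun y => ?_)
  rw [Real.norm_eq_abs, abs_mul, ← mul_assoc]
  exact mul_le_mul_of_nonneg_right (hθχ y) (abs_nonneg _)

theorem fConv_comp_inv_mul [m.IsMulLeftInvariant] (ψ h : G → ℝ) (g x : G) :
    fConv m ψ h (g⁻¹ * x) = fConv m (fun y => ψ (g⁻¹ * y)) h x := by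
  rw [fConv, fConv, ← integral_mul_left_eq_self (fun y => ψ (g⁻¹ * y) * h (y⁻¹ * x)) g]
  simp [mul_assoc]

theorem fConv_sub_sum_smul [IsFiniteMeasureOnCompacts m] {ι : Type*} [Fintype ι] {Φ : G → ℝ}
    {ψ : ι → G → ℝ} (c : ι → ℝ) (hΦc : Continuous Φ) (hΦs : HasCompactSupport Φ)
    (hψc : ∀ i, Continuous (ψ i)) (hψs : ∀ i, HasCompactSupport (ψ i)) (hhc : Continuous h) :
    fConv m (Φ - ∑ i, c i • ψ i) h = fConv m Φ h - ∑ i, c i • fConv m (ψ i) h := by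
  funext x
  have hint i := (integrable_mul_comp_inv_mul (m := m) (hψc i) (hψs i) hhc x).const_mul (c i)
  simp only [fConv, Pi.sub_apply, Finset.sum_apply, Pi.smul_apply, smul_eq_mul, sub_mul,
    Finset.sum_mul, mul_assoc]
  rw [integral_sub (integrable_mul_comp_inv_mul hΦc hΦs hhc x)
    (integrable_finsetSum _ fun i _ => hint i), integral_finsetSum _ fun i _ => hint i]
  simp_rw [integral_const_mul]

theorem integrable_comp_inv_mul [IsFiniteMeasure μ] {v : G → ℝ} (hvc : Continuous v)
    (hvb : IsBdd v) (x : G) : Integrable (fun y => v (y⁻¹ * x)) μ :=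
  let ⟨C, hC⟩ := hvb
  .of_bound (hvc.comp (continuous_inv.mul continuous_const)).aestronglyMeasurable C
    (.of_forall fun _ => hC _)

theorem mConv_add [IsFiniteMeasure μ] {v w : G → ℝ} (hvc : Continuous v) (hvb : IsBdd v)
    (hwc : Continuous w) (hwb : IsBdd w) : mConv μ (v + w) = mConv μ v + mConv μ w :=
  funext fun x =>
    integral_add (integrable_comp_inv_mul hvc hvb x) (integrable_comp_inv_mul hwc hwb x)

theorem exists_abs_mConv_sub_sum_le [T2Space G] [IsProbabilityMeasure μ] {K : Set G}
    (hK : IsCompact K) (hμK : μ Kᶜ = 0) (hψc : Continuous ψ) (hψs : HasCompactSupport ψ)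
    {ε : ℝ} (hε : 0 < ε) :
    ∃ (n : ℕ) (y : Fin n → G) (c : Fin n → ℝ), (∀ i, y i ∈ K) ∧ ∑ i, c i = 1 ∧
      ∀ x, |mConv μ ψ x - ∑ i, c i * ψ ((y i)⁻¹ * x)| ≤ ε := by
  obtain ⟨U, hU, hUψ⟩ := hψs.exists_nhds_one_abs_inv_mul_sub_lt hψc hε
  obtain ⟨n, y, P, hyK, hPm, hPd, hPK, hPU⟩ := hK.exists_measurable_partition_subset_smul hU
  have hc : ∑ i, μ.real (P i) = 1 := by
    rw [← measureReal_iUnion_fintype hPd hPm, hPK, measureReal_def,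
      (prob_compl_eq_zero_iff hK.measurableSet).1 hμK, ENNReal.toReal_one]
  refine ⟨n, y, fun i => μ.real (P i), hyK, hc, fun x => ?_⟩
  have hint := integrable_comp_inv_mul (μ := μ) hψc (hψs.isBdd hψc) x
  have hsplit : mConv μ ψ x = ∑ i, ∫ y in P i, ψ (y⁻¹ * x) ∂μ := by
    rw [← integral_iUnion_fintype hPm hPd fun i => hint.integrableOn, hPK,
      Measure.restrict_eq_self_of_ae_mem (mem_ae_iff.2 hμK), mConv]
  have hterm : ∀ i, |∫ p in P i, ψ (p⁻¹ * x) ∂μ - μ.real (P i) * ψ ((y i)⁻¹ * x)| ≤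
      ε * μ.real (P i) := by
    intro i
    rw [← smul_eq_mul, ← setIntegral_const,
      ← integral_sub hint.integrableOn (integrable_const _), ← Real.norm_eq_abs]
    refine norm_setIntegral_le_of_norm_le_const (measure_lt_top μ _) fun p hp => ?_
    obtain ⟨u, hu, rfl⟩ := hPU i hp
    simpa [mul_assoc] using (hUψ u hu ((y i)⁻¹ * x)).le
  calc |mConv μ ψ x - ∑ i, μ.real (P i) * ψ ((y i)⁻¹ * x)|
      ≤ ∑ i, |∫ p in P i, ψ (p⁻¹ * x) ∂μ - μ.real (P i) * ψ ((y i)⁻¹ * x)| := by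
        rw [hsplit, ← Finset.sum_sub_distrib]
        exact Finset.abs_sum_le_sum_abs _ _
    _ ≤ ∑ i, ε * μ.real (P i) := Finset.sum_le_sum fun i _ => hterm i
    _ = ε := by rw [← Finset.mul_sum, hc, mul_one]

theorem exists_abs_mConv_sub_sum_le_mul [T2Space G] [IsProbabilityMeasure μ] {K : Set G}
    (hK : IsCompact K) (hμK : μ Kᶜ = 0) (hψc : Continuous ψ) (hψs : HasCompactSupport ψ)
    (hχ1 : Set.EqOn χ 1 (K * tsupport ψ)) (hχ0 : ∀ x, 0 ≤ χ x) {ε : ℝ} (hε : 0 < ε) :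
    ∃ (n : ℕ) (y : Fin n → G) (c : Fin n → ℝ), ∑ i, c i = 1 ∧
      ∀ x, |mConv μ ψ x - ∑ i, c i * ψ ((y i)⁻¹ * x)| ≤ ε * χ x := by
  obtain ⟨n, y, c, hyK, hc, hcψ⟩ := exists_abs_mConv_sub_sum_le hK hμK hψc hψs hε
  refine ⟨n, y, c, hc, fun x => ?_⟩
  by_cases hx : x ∈ K * tsupport ψ
  · simpa [hχ1 hx] using hcψ x
  · have hψy i : ψ ((y i)⁻¹ * x) = 0 := image_eq_zero_of_notMem_tsupport fun hyx =>
      hx ⟨y i, hyK i, _, hyx, mul_inv_cancel_left _ _⟩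
    simpa [mConv_eq_zero_of_notMem hμK hx, hψy] using mul_nonneg hε.le (hχ0 x)

end Convolution

section CompactlySupportedMeasure

variable [Group G] [TopologicalSpace G] [IsTopologicalGroup G] [LocallyCompactSpace G]
  [MeasurableSpace G] [BorelSpace G] {μ : Measure G} {ψ h : G → ℝ} {K : Set G}

theorem continuous_mConv [IsFiniteMeasureOnCompacts μ] (hψc : Continuous ψ)
    (hψs : HasCompactSupport ψ) : Continuous (mConv μ ψ) :=
  continuous_integral_apply_inv_mul hψc hψs

theorem mConv_fConv (m : Measure G) [m.IsMulLeftInvariant] [IsFiniteMeasureOnCompacts m]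
    [IsFiniteMeasure μ] (hK : IsCompact K) (hμK : μ Kᶜ = 0) (hψc : Continuous ψ)
    (hψs : HasCompactSupport ψ) (hhc : Continuous h) :
    mConv μ (fConv m ψ h) = fConv m (mConv μ ψ) h := by
  -- `m` need not be σ-finite, so Fubini is applied to an integrand made compactly supported
  -- by a cutoff `χ` equal to `1` on `K`.
  obtain ⟨χ, hχK, -, hχs, -⟩ :=
    exists_continuous_one_zero_of_isCompact hK isClosed_empty (Set.disjoint_empty _)
  have hχ : ∀ᵐ y ∂μ, χ y = 1 := by
    filter_upwards [mem_ae_iff.2 hμK] with y hy using hχK hy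
  funext x
  let F : G → G → ℝ := fun y z => χ y * ψ (y⁻¹ * z) * h (z⁻¹ * x)
  have hFc : Continuous F.uncurry :=
    ((χ.continuous.comp continuous_fst).mul
      (hψc.comp (continuous_fst.inv.mul continuous_snd))).mul
        (hhc.comp (continuous_snd.inv.mul continuous_const))
  have hFs : HasCompactSupport F.uncurry := by
    refine HasCompactSupport.intro (hχs.prod (hχs.mul hψs)) fun ⟨y, z⟩ hyz => ?_
    by_contra hF
    have hχy : χ y ≠ 0 := fun h0 => hF (by simp [F, h0])
    have hψz : ψ (y⁻¹ * z) ≠ 0 := fun h0 => hF (by simp [F, h0])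
    exact hyz ⟨subset_tsupport _ hχy,
      y, subset_tsupport _ hχy, _, subset_tsupport _ hψz, mul_inv_cancel_left y z⟩
  calc mConv μ (fConv m ψ h) x = ∫ y, ∫ z, F y z ∂m ∂μ := by
        refine integral_congr_ae ?_
        filter_upwards [hχ] with y hy
        rw [fConv_comp_inv_mul]
        simp [F, hy, fConv]
    _ = ∫ z, ∫ y, F y z ∂μ ∂m := integral_integral_swap_of_hasCompactSupport hFc hFs
    _ = fConv m (mConv μ ψ) h x := by
        refine integral_congr_ae (.of_forall fun z => ?_)
        show _ = (∫ y, ψ (y⁻¹ * z) ∂μ) * h (z⁻¹ * x)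
        rw [← integral_mul_const]
        refine integral_congr_ae ?_
        filter_upwards [hχ] with y hy
        simp [F, hy]

end CompactlySupportedMeasure

structure IsPositiveInvariantOn [Group G] (D : Submodule ℝ (G → ℝ)) (I : (G → ℝ) → ℝ) :
    Prop where
  map_add : ∀ v ∈ D, ∀ w ∈ D, I (v + w) = I v + I w
  map_smul : ∀ c : ℝ, ∀ v ∈ D, I (c • v) = c * I v
  nonneg : ∀ v ∈ D, (∀ x, 0 ≤ v x) → 0 ≤ I v
  map_comp_inv_mul : ∀ g : G, ∀ v ∈ D, I (fun x => v (g⁻¹ * x)) = I v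

namespace IsPositiveInvariantOn

variable [Group G] {D : Submodule ℝ (G → ℝ)} {I : (G → ℝ) → ℝ}

theorem map_sub (hI : IsPositiveInvariantOn D I) {v w : G → ℝ} (hv : v ∈ D) (hw : w ∈ D) :
    I (v - w) = I v - I w := by
  rw [sub_eq_add_neg, ← neg_one_smul ℝ w, hI.map_add v hv _ (D.smul_mem _ hw),
    hI.map_smul _ w hw, neg_one_mul, ← sub_eq_add_neg]

theorem map_sum_smul (hI : IsPositiveInvariantOn D I) {ι : Type*} (s : Finset ι) (c : ι → ℝ)
    {w : ι → G → ℝ} (hw : ∀ i, w i ∈ D) : I (∑ i ∈ s, c i • w i) = ∑ i ∈ s, c i * I (w i) := by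
  classical
  induction s using Finset.induction_on with
  | empty => simpa using hI.map_smul 0 0 D.zero_mem
  | insert a s ha ih =>
    rw [Finset.sum_insert ha, Finset.sum_insert ha, hI.map_add _ (D.smul_mem _ (hw a)) _
      (D.sum_mem fun i _ => D.smul_mem _ (hw i)), hI.map_smul _ _ (hw a), ih]

theorem abs_map_le (hI : IsPositiveInvariantOn D I) {v w : G → ℝ} (hv : v ∈ D) (hw : w ∈ D)
    (hvw : ∀ x, |v x| ≤ w x) : |I v| ≤ I w := by
  have h₁ := hI.nonneg _ (D.sub_mem hw hv) fun x => sub_nonneg.2 (le_of_abs_le (hvw x))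
  have h₂ := hI.nonneg _ (D.add_mem hw hv) fun x =>
    neg_le_iff_add_nonneg'.1 (neg_le_of_abs_le (hvw x))
  rw [hI.map_sub hw hv] at h₁
  rw [hI.map_add w hw v hv] at h₂
  exact _root_.abs_le.2 ⟨by linarith, by linarith⟩

end IsPositiveInvariantOn

section Invariance

variable [Group G] [TopologicalSpace G] [IsTopologicalGroup G] [LocallyCompactSpace G]
  [T2Space G] [MeasurableSpace G] [BorelSpace G] {m μ : Measure G} [m.IsMulLeftInvariant]
  [IsFiniteMeasureOnCompacts m] {D : Submodule ℝ (G → ℝ)} {I : (G → ℝ) → ℝ}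

theorem IsPositiveInvariantOn.map_mConv_fConv (hI : IsPositiveInvariantOn D I)
    [IsProbabilityMeasure μ] {K : Set G} (hK : IsCompact K) (hμK : μ Kᶜ = 0) {ψ h : G → ℝ}
    (hψc : Continuous ψ) (hψs : HasCompactSupport ψ) (hhc : Continuous h)
    (hD : ∀ χ, Continuous χ → HasCompactSupport χ →
      fConv m χ h ∈ D ∧ fConv m χ (fun x => |h x|) ∈ D) :
    I (mConv μ (fConv m ψ h)) = I (fConv m ψ h) := by
  obtain ⟨χ, hχ1, -, hχs, hχ01⟩ :=
    exists_continuous_one_zero_of_isCompact (hK.mul hψs) isClosed_empty (Set.disjoint_empty _)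
  have hΦc := continuous_mConv (μ := μ) hψc hψs
  have hΦs := hasCompactSupport_mConv hK hμK hψs
  have hv := (hD ψ hψc hψs).1
  have hμv : mConv μ (fConv m ψ h) ∈ D := by
    rw [mConv_fConv m hK hμK hψc hψs hhc]
    exact (hD _ hΦc hΦs).1
  have hE := (hD χ χ.continuous hχs).2
  refine eq_of_forall_pos_abs_sub_le_mul (c := I (fConv m χ fun x => |h x|))
    fun ε hε => ?_
  obtain ⟨n, y, c, hc, hθ⟩ :=
    exists_abs_mConv_sub_sum_le_mul hK hμK hψc hψs hχ1 (fun x => (hχ01 x).1) hε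
  let ψy : Fin n → G → ℝ := fun i x => ψ ((y i)⁻¹ * x)
  have hψyc i : Continuous (ψy i) := hψc.comp (continuous_const_mul _)
  have hψys i : HasCompactSupport (ψy i) := hψs.comp_homeomorph (Homeomorph.mulLeft _)
  have hτ i : fConv m (ψy i) h ∈ D := (hD _ (hψyc i) (hψys i)).1
  have hτI i : I (fConv m (ψy i) h) = I (fConv m ψ h) := by
    rw [← funext (fConv_comp_inv_mul ψ h (y i))]
    exact hI.map_comp_inv_mul _ _ hv
  have hsum : I (∑ i, c i • fConv m (ψy i) h) = I (fConv m ψ h) := by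
    simp_rw [hI.map_sum_smul _ _ hτ, hτI, ← Finset.sum_mul, hc, one_mul]
  have hsumD : ∑ i, c i • fConv m (ψy i) h ∈ D := D.sum_mem fun i _ => D.smul_mem _ (hτ i)
  have hdiff : mConv μ (fConv m ψ h) - ∑ i, c i • fConv m (ψy i) h =
      fConv m (mConv μ ψ - ∑ i, c i • ψy i) h := by
    rw [mConv_fConv m hK hμK hψc hψs hhc, fConv_sub_sum_smul c hΦc hΦs hψyc hψys hhc]
  calc |I (mConv μ (fConv m ψ h)) - I (fConv m ψ h)|
      = |I (mConv μ (fConv m ψ h) - ∑ i, c i • fConv m (ψy i) h)| := by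
        rw [hI.map_sub hμv hsumD, hsum]
    _ ≤ I (ε • fConv m χ fun x => |h x|) := by
        refine hI.abs_map_le (D.sub_mem hμv hsumD) (D.smul_mem ε hE) fun x => ?_
        rw [hdiff]
        exact abs_fConv_le χ.continuous hχs hhc (fun x => by simpa [ψy] using hθ x) x
    _ = ε * I (fConv m χ fun x => |h x|) := hI.map_smul ε _ hE

end Invariance

section Generators

variable [Group G] [TopologicalSpace G]

theorem RUCb.abs {h : G → ℝ} (hh : RUCb h) : RUCb fun x => |h x| := by
  obtain ⟨⟨C, hC⟩, hc, hu⟩ := hh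
  refine ⟨⟨C, fun x => by simpa using hC x⟩, hc.abs, fun ε hε => ?_⟩
  obtain ⟨U, hU, hUε⟩ := hu ε hε
  exact ⟨U, hU, fun g hg x => (abs_abs_sub_abs_le_abs_sub _ _).trans_lt (hUε g hg x)⟩

def boundedContinuousSubmodule : Submodule ℝ (G → ℝ) where
  carrier := {v | Continuous v ∧ IsBdd v}
  add_mem' := fun ⟨hvc, C, hC⟩ ⟨hwc, C', hC'⟩ => ⟨hvc.add hwc, C + C', fun x =>
    (abs_add_le _ _).trans (add_le_add (hC x) (hC' x))⟩
  zero_mem' := ⟨continuous_const, 0, fun _ => by simp⟩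
  smul_mem' := fun c _ ⟨hvc, C, hC⟩ => ⟨continuous_const.mul hvc, |c| * C, fun x => by
    rw [Pi.smul_apply, smul_eq_mul, abs_mul]
    exact mul_le_mul_of_nonneg_left (hC x) (abs_nonneg c)⟩

variable [MeasurableSpace G]

theorem MDom.abs {f h : G → ℝ} (hh : MDom f h) : MDom f fun x => |h x| := by
  obtain ⟨μ, hμ, hμh⟩ := hh
  exact ⟨μ, hμ, fun x => by simpa using hμh x⟩

def convSpan (m : Measure G) (f : G → ℝ) : Submodule ℝ (G → ℝ) :=
  Submodule.span ℝ {v | ∃ ψ h : G → ℝ,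
    Continuous ψ ∧ HasCompactSupport ψ ∧ RUCb h ∧ MDom f h ∧ v = fConv m ψ h}

variable {m : Measure G} {f ψ h : G → ℝ}

theorem fConv_mem_convSpan (hψc : Continuous ψ) (hψs : HasCompactSupport ψ) (hh : RUCb h)
    (hhf : MDom f h) : fConv m ψ h ∈ convSpan m f :=
  Submodule.subset_span ⟨ψ, h, hψc, hψs, hh, hhf, rfl⟩

variable [IsTopologicalGroup G] [BorelSpace G] [IsFiniteMeasureOnCompacts m]

theorem convSpan_le_boundedContinuousSubmodule :
    convSpan m f ≤ (boundedContinuousSubmodule : Submodule ℝ (G → ℝ)) :=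
  Submodule.span_le.2 fun _ ⟨_, _, hψc, hψs, ⟨hhb, hhc, _⟩, _, hv⟩ => hv ▸
    ⟨continuous_fConv hψc hψs hhc, isBdd_fConv (hψc.integrable_of_hasCompactSupport hψs) hhb⟩

theorem IsPositiveInvariantOn.map_mConv_of_mem_convSpan [LocallyCompactSpace G] [T2Space G]
    [m.IsMulLeftInvariant] {I : (G → ℝ) → ℝ} (hI : IsPositiveInvariantOn (convSpan m f) I)
    (μ : Measure G) [IsProbabilityMeasure μ] {K : Set G} (hK : IsCompact K) (hμK : μ Kᶜ = 0)
    {v : G → ℝ} (hv : v ∈ convSpan m f) : I (mConv μ v) = I v := by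
  suffices mConv μ v ∈ convSpan m f ∧ I (mConv μ v) = I v from this.2
  induction hv using Submodule.span_induction with
  | mem v hv =>
    obtain ⟨ψ, h, hψc, hψs, hh, hhf, rfl⟩ := hv
    refine ⟨?_, hI.map_mConv_fConv hK hμK hψc hψs hh.2.1 fun χ hχc hχs =>
      ⟨fConv_mem_convSpan hχc hχs hh hhf, fConv_mem_convSpan hχc hχs hh.abs hhf.abs⟩⟩
    rw [mConv_fConv m hK hμK hψc hψs hh.2.1]
    exact fConv_mem_convSpan (continuous_mConv hψc hψs) (hasCompactSupport_mConv hK hμK hψs) hh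
      hhf
  | zero =>
    rw [mConv_zero]
    exact ⟨zero_mem _, rfl⟩
  | add v w hv hw ihv ihw =>
    obtain ⟨hvc, hvb⟩ := convSpan_le_boundedContinuousSubmodule hv
    obtain ⟨hwc, hwb⟩ := convSpan_le_boundedContinuousSubmodule hw
    rw [mConv_add hvc hvb hwc hwb, hI.map_add _ ihv.1 _ ihw.1, ihv.2, ihw.2,
      hI.map_add _ hv _ hw]
    exact ⟨add_mem ihv.1 ihw.1, rfl⟩
  | smul c v hv ihv =>
    rw [mConv_smul, hI.map_smul _ _ ihv.1, ihv.2, hI.map_smul _ _ hv]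
    exact ⟨Submodule.smul_mem _ c ihv.1, rfl⟩

end Generators

theorem statement_14_general [Group G] [TopologicalSpace G] [IsTopologicalGroup G] [LocallyCompactSpace G]
    [T2Space G] [MeasurableSpace G] [BorelSpace G]
    (m : Measure G) [m.IsHaarMeasure]
    (f : G → ℝ)
    (D : Submodule ℝ (G → ℝ))
    (hD : D = Submodule.span ℝ {v : G → ℝ | ∃ ψ h : G → ℝ,
      Continuous ψ ∧ HasCompactSupport ψ ∧ RUCb h ∧ MDom f h ∧ v = fConv m ψ h})
    (I : (G → ℝ) → ℝ)
    (Iadd : ∀ h ∈ D, ∀ v ∈ D, I (h + v) = I h + I v)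
    (Ismul : ∀ c : ℝ, ∀ h ∈ D, I (c • h) = c * I h)
    (Ipos : ∀ v ∈ D, (∀ x, 0 ≤ v x) → 0 ≤ I v)
    (Iinv : ∀ g : G, ∀ v ∈ D, I (fun x => v (g⁻¹ * x)) = I v) :
    ∀ μ : Measure G, MComp μ → μ Set.univ = 1 →
      ∀ h ∈ D, I (mConv μ h) = I h := by
  rintro μ ⟨-, -, K, hK, hμK⟩ hμ1 v hv
  have : IsProbabilityMeasure μ := ⟨hμ1⟩
  subst hD
  exact IsPositiveInvariantOn.map_mConv_of_mem_convSpan ⟨Iadd, Ismul, Ipos, Iinv⟩ μ hK hμK hv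

theorem statement_14 [Group G] [TopologicalSpace G] [IsTopologicalGroup G] [LocallyCompactSpace G]
    [T2Space G] [MeasurableSpace G] [BorelSpace G]
    (m : Measure G) [m.IsHaarMeasure]
    (f : G → ℝ) (hf : RUCb f) (hf0 : ∀ x, 0 ≤ f x) (hfne : f ≠ 0)
    (φ : G → ℝ) (hφc : Continuous φ) (hφs : HasCompactSupport φ)
    (hφ0 : ∀ x, 0 ≤ φ x) (hφ1 : ∫ x, φ x ∂m = 1)
    (D : Submodule ℝ (G → ℝ))
    (hD : D = Submodule.span ℝ {v : G → ℝ | ∃ ψ h : G → ℝ,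
      Continuous ψ ∧ HasCompactSupport ψ ∧ RUCb h ∧ MDom f h ∧ v = fConv m ψ h})
    (I : (G → ℝ) → ℝ)
    (Iadd : ∀ h ∈ D, ∀ v ∈ D, I (h + v) = I h + I v)
    (Ismul : ∀ c : ℝ, ∀ h ∈ D, I (c • h) = c * I h)
    (Ipos : ∀ v ∈ D, (∀ x, 0 ≤ v x) → 0 ≤ I v)
    (Iinv : ∀ g : G, ∀ v ∈ D, I (fun x => v (g⁻¹ * x)) = I v)
    (C : ℝ) (hC : 0 ≤ C)
    (Icont : ∀ v ∈ D, |I v| ≤ C * pNorm (fConv m φ f) v) :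
    ∀ μ : Measure G, MComp μ → μ Set.univ = 1 →
      ∀ h ∈ D, I (mConv μ h) = I h :=
  statement_14_general m f D hD I Iadd Ismul Ipos Iinv
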